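/- Let H be a real Hilbert space in which the norm satisfies ‖f‖_H = sup { |T f| : T ∈ D, ‖T‖_{H*} ≤ 1 } for a dense subspace D of H*. Let s_N be the minimum-norm interpolant of f with respect to functionals A^1,...,A^N whose span exhausts D as N → ∞. Then ‖s_N‖_H → ‖f‖_H as N → ∞. -/

import Mathlib

/-!
Minimality tested against `f` itself gives `‖s N‖ ≤ ‖f‖`. Conversely, a functional `T` in the
span of the `A k` is a combination of finitely many of them, so `T (s N) = T f` for large `N`;
if moreover `‖T‖ ≤ 1` then `|T f| ≤ ‖s N‖` eventually, and the supremum of these `|T f|` is `‖f‖`.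
-/

open Filter

theorem Submodule.exists_mem_span_image_Iic_of_mem_span_range {R M : Type*} [Semiring R]
    [AddCommMonoid M] [Module R M] {A : ℕ → M} {T : M}
    (hT : T ∈ Submodule.span R (Set.range A)) :
    ∃ N, T ∈ Submodule.span R (A '' Set.Iic N) := by
  have hmono : Monotone fun N => Submodule.span R (A '' Set.Iic N) := fun _ _ hMN =>
    Submodule.span_mono (Set.image_mono (Set.Iic_subset_Iic.2 hMN))
  rw [← Set.image_univ, ← Set.iUnion_Iic, Set.image_iUnion, Submodule.span_iUnion] at hT
  exact (Submodule.mem_iSup_of_directed _ hmono.directed_le).1 hT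

theorem ContinuousLinearMap.apply_eq_of_mem_span {𝕜 E F : Type*} [NontriviallyNormedField 𝕜]
    [NormedAddCommGroup E] [NormedSpace 𝕜 E] [NormedAddCommGroup F] [NormedSpace 𝕜 F]
    {S : Set (E →L[𝕜] F)} {x y : E} (h : ∀ B ∈ S, B x = B y) {T : E →L[𝕜] F}
    (hT : T ∈ Submodule.span 𝕜 S) : T x = T y :=
  (Submodule.span_le (p := LinearMap.eqLocus (ContinuousLinearMap.apply 𝕜 F x).toLinearMap
    (ContinuousLinearMap.apply 𝕜 F y).toLinearMap)).2 h hT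

theorem ContinuousLinearMap.eventually_apply_eq_of_mem_span_range {𝕜 E F : Type*}
    [NontriviallyNormedField 𝕜] [NormedAddCommGroup E] [NormedSpace 𝕜 E] [NormedAddCommGroup F]
    [NormedSpace 𝕜 F] {A : ℕ → E →L[𝕜] F} {x : ℕ → E} {y : E}
    (hx : ∀ N, ∀ k ≤ N, A k (x N) = A k y) {T : E →L[𝕜] F}
    (hT : T ∈ Submodule.span 𝕜 (Set.range A)) : ∀ᶠ N in atTop, T (x N) = T y := by
  obtain ⟨N₀, hN₀⟩ := Submodule.exists_mem_span_image_Iic_of_mem_span_range hT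
  filter_upwards [eventually_ge_atTop N₀] with N hN
  refine ContinuousLinearMap.apply_eq_of_mem_span ?_ hN₀
  rintro _ ⟨k, hk, rfl⟩
  exact hx N k (hk.trans hN)

theorem spline_norm_convergence_general
    {H : Type*} [NormedAddCommGroup H] [InnerProductSpace ℝ H]
    (A : ℕ → (H →L[ℝ] ℝ))
    (hnorm : ∀ g : H, ‖g‖ = sSup ((fun T : H →L[ℝ] ℝ => |T g|) ''
      {T | T ∈ Submodule.span ℝ (Set.range A) ∧ ‖T‖ ≤ 1}))
    (f : H) (s : ℕ → H)
    (hinterp : ∀ N, ∀ k ≤ N, A k (s N) = A k f)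
    (hmin : ∀ N (h : H), (∀ k ≤ N, A k h = A k f) → ‖s N‖ ≤ ‖h‖) :
    Tendsto (fun N => ‖s N‖) atTop (nhds ‖f‖) := by
  refine tendsto_order.2 ⟨fun a ha => ?_, fun a ha =>
    Eventually.of_forall fun N => (hmin N f fun _ _ => rfl).trans_lt ha⟩
  rw [hnorm f] at ha
  obtain ⟨_, ⟨T, ⟨hTD, hT1⟩, rfl⟩, haT⟩ :=
    exists_lt_of_lt_csSup (hb := ha) (Set.image_nonempty.2 ⟨0, by simp⟩)
  filter_upwards [ContinuousLinearMap.eventually_apply_eq_of_mem_span_range hinterp hTD]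
    with N hN
  calc a < |T f| := haT
    _ = |T (s N)| := by rw [hN]
    _ ≤ ‖T‖ * ‖s N‖ := T.le_opNorm (s N)
    _ ≤ ‖s N‖ := mul_le_of_le_one_left (norm_nonneg _) hT1

/-- Convergence of norms of the minimum-norm interpolants: if the norm of `H`
is recovered as the supremum of `|T g|` over functionals `T` in the dense
subspace `D = span {A k}` with `‖T‖ ≤ 1`, then `‖s N‖ → ‖f‖`. -/
theorem spline_norm_convergence
    {H : Type*} [NormedAddCommGroup H] [InnerProductSpace ℝ H] [CompleteSpace H]
    (A : ℕ → (H →L[ℝ] ℝ))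
    (hdense : Dense ((Submodule.span ℝ (Set.range A) : Submodule ℝ (H →L[ℝ] ℝ)) : Set (H →L[ℝ] ℝ)))
    (hnorm : ∀ g : H, ‖g‖ = sSup ((fun T : H →L[ℝ] ℝ => |T g|) ''
      {T | T ∈ Submodule.span ℝ (Set.range A) ∧ ‖T‖ ≤ 1}))
    (f : H) (s : ℕ → H)
    (hinterp : ∀ N, ∀ k ≤ N, A k (s N) = A k f)
    (hmin : ∀ N (h : H), (∀ k ≤ N, A k h = A k f) → ‖s N‖ ≤ ‖h‖) :
    Tendsto (fun N => ‖s N‖) atTop (nhds ‖f‖) :=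
  spline_norm_convergence_general A hnorm f s hinterp hmin
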